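/- The coefficients of the exponential-polynomial representation of the Legendre Fourier transforms satisfy the symmetry A_m^j = (−1)^{1+j−m} B_m^j for all j ∈ ℕ₀ and 0 ≤ m ≤ j. -/

import Mathlib

/-- The recurrence satisfied by both coefficient families `A_m^j` and `B_m^j`
(indexing: `X j m` means `X_m^j`). -/
def CoeffRec (X : ℕ → ℕ → ℝ) : Prop :=
  ∀ j : ℕ, 1 ≤ j →
    (X (j+1) 0 = Real.sqrt ((2*(j:ℝ)+3)/(2*(j:ℝ)-1)) * X (j-1) 0) ∧
    (∀ m : ℕ, 1 ≤ m → m ≤ j - 1 →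
      X (j+1) m = Real.sqrt ((2*(j:ℝ)+3)/(2*(j:ℝ)-1)) * X (j-1) m
        - 2 * Real.sqrt ((2*(j:ℝ)+1)*(2*(j:ℝ)+3)) * X j (m-1)) ∧
    (X (j+1) j = -(2 * Real.sqrt ((2*(j:ℝ)+1)*(2*(j:ℝ)+3))) * X j (j-1)) ∧
    (X (j+1) (j+1) = -(2 * Real.sqrt ((2*(j:ℝ)+1)*(2*(j:ℝ)+3))) * X j j)

/-!
Both sides satisfy the same recurrence: every term of `CoeffRec` links entries `X_m^j` whose
differences `j - m` have the same parity, so the sign twist `(-1)^(1+j-m) B_m^j` satisfies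
`CoeffRec` again. It agrees with `A` on rows `j = 0, 1`, and a solution of `CoeffRec` is
determined by these two rows, since row `j + 1` is computed from rows `j - 1` and `j`.
-/

namespace CoeffRec

variable {X Y : ℕ → ℕ → ℝ}

theorem row_succ_eq (hX : CoeffRec X) (hY : CoeffRec Y) {j : ℕ} (hj : 1 ≤ j)
    (hprev : ∀ m ≤ j - 1, X (j - 1) m = Y (j - 1) m) (hcur : ∀ m ≤ j, X j m = Y j m) :
    ∀ m ≤ j + 1, X (j + 1) m = Y (j + 1) m := by
  obtain ⟨hX0, hXmid, hXj, hXj1⟩ := hX j hj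
  obtain ⟨hY0, hYmid, hYj, hYj1⟩ := hY j hj
  intro m hm
  rcases Nat.eq_zero_or_pos m with rfl | hm1
  · rw [hX0, hY0, hprev 0 (Nat.zero_le _)]
  rcases Nat.lt_or_ge m j with hmj | hjm
  · rw [hXmid m hm1 (by omega), hYmid m hm1 (by omega), hprev m (by omega), hcur (m - 1) (by omega)]
  rcases hm.lt_or_eq with hm_lt | rfl
  · obtain rfl : m = j := by omega
    rw [hXj, hYj, hcur (m - 1) (by omega)]
  · rw [hXj1, hYj1, hcur j le_rfl]

theorem eq_of_eq_rows_zero_one (hX : CoeffRec X) (hY : CoeffRec Y) (h0 : X 0 0 = Y 0 0)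
    (h1 : ∀ m ≤ 1, X 1 m = Y 1 m) : ∀ j, ∀ m ≤ j, X j m = Y j m := by
  suffices h : ∀ j, (∀ m ≤ j, X j m = Y j m) ∧ ∀ m ≤ j + 1, X (j + 1) m = Y (j + 1) m from
    fun j => (h j).1
  intro j
  induction j with
  | zero => exact ⟨fun m hm => by rw [Nat.le_zero.mp hm, h0], h1⟩
  | succ j ih => exact ⟨ih.2, row_succ_eq hX hY (Nat.succ_pos j) ih.1 ih.2⟩

theorem sign_twist (hX : CoeffRec X) : CoeffRec fun j m => (-1 : ℝ) ^ (1 + j - m) * X j m := by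
  intro j hj
  obtain ⟨h0, hmid, hj', hj1⟩ := hX j hj
  obtain ⟨k, rfl⟩ := Nat.exists_eq_add_of_le' hj
  simp only [Nat.add_sub_cancel] at h0 hmid hj' hj1 ⊢
  refine ⟨?_, fun m hm1 hm => ?_, ?_, ?_⟩
  · rw [h0, show 1 + (k + 1 + 1) - 0 = (1 + k - 0) + 2 by omega, pow_add]
    ring
  · rw [hmid m hm1 hm, show 1 + (k + 1 + 1) - m = (1 + k - m) + 2 by omega,
      show 1 + (k + 1) - (m - 1) = (1 + k - m) + 2 by omega, pow_add]
    ring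
  · rw [hj', show 1 + (k + 1 + 1) - (k + 1) = 1 + (k + 1) - k by omega]
    ring
  · rw [hj1]
    ring

end CoeffRec

theorem AB_symmetry (A B : ℕ → ℕ → ℝ)
    (hA0 : A 0 0 = -1) (hB0 : B 0 0 = 1)
    (hA10 : A 1 0 = Real.sqrt 3) (hA11 : A 1 1 = 2 * Real.sqrt 3)
    (hB10 : B 1 0 = Real.sqrt 3) (hB11 : B 1 1 = -(2 * Real.sqrt 3))
    (hArec : CoeffRec A) (hBrec : CoeffRec B) :
    ∀ j : ℕ, ∀ m : ℕ, m ≤ j → A j m = (-1:ℝ)^(1 + j - m) * B j m := by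
  refine hArec.eq_of_eq_rows_zero_one hBrec.sign_twist (by norm_num [hA0, hB0]) ?_
  intro m hm
  interval_cases m
  · norm_num [hA10, hB10]
  · norm_num [hA11, hB11]
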